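/- Two absolute involutions v, w of G(r,n) are S_n-conjugate (i.e. there exists τ ∈ Perm(Fin n) with w = τ·v·τ⁻¹ under absolute conjugation) if and only if fix_i(v) = fix_i(w) and pair_i(v) = pair_i(w) for every i ∈ ZMod r. -/

import Mathlib

noncomputable section

/-- The wreath product `G(r,n) = C_r ≀ S_n`, realized as pairs of a color vector
`z : Fin n → ZMod r` and a permutation `p` of `Fin n`. -/
@[ext] structure WreathG (r n : ℕ) where
  z : Fin n → ZMod r
  p : Equiv.Perm (Fin n)

namespace WreathG

variable {r n : ℕ}

instance : One (WreathG r n) := ⟨⟨0, 1⟩⟩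
instance : Mul (WreathG r n) := ⟨fun g h => ⟨g.z + h.z ∘ g.p.symm, g.p * h.p⟩⟩
instance : Inv (WreathG r n) := ⟨fun g => ⟨-(g.z ∘ g.p), g.p⁻¹⟩⟩

@[simp] theorem one_z : (1 : WreathG r n).z = 0 := rfl
@[simp] theorem one_p : (1 : WreathG r n).p = 1 := rfl
@[simp] theorem mul_z (a b : WreathG r n) : (a * b).z = a.z + b.z ∘ a.p.symm := rfl
@[simp] theorem mul_p (a b : WreathG r n) : (a * b).p = a.p * b.p := rfl
@[simp] theorem inv_z (a : WreathG r n) : (a⁻¹).z = -(a.z ∘ a.p) := rfl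
@[simp] theorem inv_p (a : WreathG r n) : (a⁻¹).p = a.p⁻¹ := rfl

instance : Group (WreathG r n) :=
  Group.ofLeftAxioms
    (fun a b c => by
      refine WreathG.ext ?_ (mul_assoc a.p b.p c.p)
      funext x
      show (a.z x + b.z (a.p.symm x)) + c.z ((a.p * b.p).symm x)
          = a.z x + (b.z (a.p.symm x) + c.z (b.p.symm (a.p.symm x)))
      have h : (a.p * b.p).symm x = b.p.symm (a.p.symm x) := rfl
      rw [h, add_assoc])
    (fun a => by
      refine WreathG.ext ?_ (one_mul a.p)
      funext x
      show 0 + a.z ((1 : Equiv.Perm (Fin n)).symm x) = a.z x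
      simp only [zero_add]
      rfl)
    (fun a => by
      refine WreathG.ext ?_ (inv_mul_cancel a.p)
      funext x
      show -(a.z (a.p x)) + a.z ((a.p⁻¹).symm x) = 0
      have h : (a.p⁻¹).symm x = a.p x := rfl
      rw [h, neg_add_cancel])

/-- An absolute involution of `G(r,n)`: `|v|² = 1` and `z ∘ |v| = z`. -/
def IsAbsInv (v : WreathG r n) : Prop := v.p ^ 2 = 1 ∧ v.z ∘ v.p = v.z

instance (v : WreathG r n) : Decidable (IsAbsInv v) :=
  inferInstanceAs (Decidable (_ ∧ _))

/-- Absolute conjugation `τ·(z,σ)·τ⁻¹ = (z ∘ τ⁻¹, τστ⁻¹)`. -/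
def aconj (τ : Equiv.Perm (Fin n)) (v : WreathG r n) : WreathG r n :=
  ⟨v.z ∘ τ.symm, τ * v.p * τ⁻¹⟩

theorem IsAbsInv.aconj {v : WreathG r n} (h : IsAbsInv v) (τ : Equiv.Perm (Fin n)) :
    IsAbsInv (WreathG.aconj τ v) := by
  obtain ⟨h1, h2⟩ := h
  constructor
  · show (τ * v.p * τ⁻¹) ^ 2 = 1
    have key : (τ * v.p * τ⁻¹) * (τ * v.p * τ⁻¹) = τ * (v.p * v.p) * τ⁻¹ := by
      simp [mul_assoc]
    rw [sq, key, ← sq, h1, mul_one, mul_inv_cancel]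
  · funext x
    have := congrFun h2 (τ.symm x)
    simpa [WreathG.aconj, Function.comp] using this

/-- `⟨g,v⟩ = ∑ i z_i(g)·z_i(v) ∈ ZMod r`. -/
def pairing (g v : WreathG r n) : ZMod r := ∑ i, g.z i * v.z i

/-- `inv_v(g)`: the number of pairs `i < j` with `|v|(i) = j` and `|g|(i) > |g|(j)`. -/
def invv (v g : WreathG r n) : ℕ :=
  Nat.card {q : Fin n × Fin n // q.1 < q.2 ∧ v.p q.1 = q.2 ∧ g.p q.2 < g.p q.1}

/-- The number of inversions of a permutation. -/
def invPerm (σ : Equiv.Perm (Fin n)) : ℕ :=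
  Nat.card {q : Fin n × Fin n // q.1 < q.2 ∧ σ q.2 < σ q.1}

/-- `fix_i(v)`: the number of `j` with `|v|(j) = j` and `z_j(v) = i`. -/
def fixc (v : WreathG r n) (i : ZMod r) : ℕ :=
  Nat.card {j : Fin n // v.p j = j ∧ v.z j = i}

/-- `pair_i(v)`: the number of pairs `j < k` with `|v|(j) = k` and `z_j(v) = z_k(v) = i`. -/
def pairc (v : WreathG r n) (i : ZMod r) : ℕ :=
  Nat.card {q : Fin n × Fin n // q.1 < q.2 ∧ v.p q.1 = q.2 ∧ v.z q.1 = i ∧ v.z q.2 = i}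

instance : DecidableEq (WreathG r n) := fun a b =>
  decidable_of_iff (a.z = b.z ∧ a.p = b.p)
    (by constructor
        · rintro ⟨h1, h2⟩; exact WreathG.ext h1 h2
        · rintro rfl; exact ⟨rfl, rfl⟩)

instance [NeZero r] : Fintype (WreathG r n) :=
  Fintype.ofEquiv ((Fin n → ZMod r) × Equiv.Perm (Fin n))
    { toFun := fun x => ⟨x.1, x.2⟩
      invFun := fun g => (g.z, g.p)
      left_inv := fun _ => rfl
      right_inv := fun _ => rfl }

end WreathG

/-- The set `I(r,n)` of absolute involutions, as a subtype. -/
abbrev AbsInv (r n : ℕ) := {v : WreathG r n // WreathG.IsAbsInv v}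

/-- The model space `M`: the complex vector space with basis `{C_v : v ∈ I(r,n)}`. -/
abbrev ModelSpace (r n : ℕ) := AbsInv r n →₀ ℂ

/-- `ζ_r = exp(2πi/r)`. -/
def zetaC (r : ℕ) : ℂ := Complex.exp (2 * Real.pi * Complex.I / r)

/-- `ζ_r` raised to an exponent in `ZMod r` (well defined since `ζ_r^r = 1`). -/
def zetaPow (r : ℕ) (a : ZMod r) : ℂ := zetaC r ^ a.val

/-- The Gelfand model operator `ϱ(g) C_v = ζ_r^{⟨g,v⟩} (−1)^{inv_v(g)} C_{|g|v|g|⁻¹}`. -/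
def modelRho {r n : ℕ} (g : WreathG r n) :
    ModelSpace r n →ₗ[ℂ] ModelSpace r n :=
  Finsupp.lsum ℂ fun v =>
    ((zetaPow r (WreathG.pairing g v.1) * (-1 : ℂ) ^ WreathG.invv v.1 g) •
      Finsupp.lsingle (⟨WreathG.aconj g.p v.1, v.2.aconj g.p⟩ : AbsInv r n))

/-- The auxiliary operator `φ(g) C_v = ζ_r^{⟨g,v⟩} C_{|g|v|g|⁻¹}`. -/
def modelPhi {r n : ℕ} (g : WreathG r n) :
    ModelSpace r n →ₗ[ℂ] ModelSpace r n :=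
  Finsupp.lsum ℂ fun v =>
    ((zetaPow r (WreathG.pairing g v.1)) •
      Finsupp.lsingle (⟨WreathG.aconj g.p v.1, v.2.aconj g.p⟩ : AbsInv r n))

/-! An involution `f` of a linear order splits into its fixed points and its 2-cycles, each
2-cycle being represented by its smaller point; this gives an equivalence
`α ≃ {a // f a = a} ⊕ {a // a < f a} × Bool` turning `f` into negation of the `Bool`, and
compatible with any colouring constant on the orbits of `f`. Hence two coloured involutions are
isomorphic as soon as, colour by colour, they have equally many fixed points and 2-cycles.
Conversely these numbers are invariants: an isomorphism matches fixed points and colour classes,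
and the class of colour `k` has `fix_k + 2 pair_k` elements. An absolute involution `v` is the
coloured involution `(|v|, z(v))` of `Fin n`, and `w = τ·v·τ⁻¹` says exactly that `τ` is an
isomorphism from `v` to `w`. -/

namespace Function.Involutive

variable {α κ : Type*} [LinearOrder α] {f : α → α}

def equivFixedSumPairs (hf : Involutive f) : α ≃ {a // f a = a} ⊕ {a // a < f a} × Bool where
  toFun a :=
    if hfix : f a = a then .inl ⟨a, hfix⟩
    else if hlt : a < f a then .inr (⟨a, hlt⟩, true)
    else .inr (⟨f a, by rw [hf a]; exact lt_of_le_of_ne (not_lt.1 hlt) hfix⟩, false)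
  invFun
    | .inl x => x
    | .inr (x, true) => x
    | .inr (x, false) => f x
  left_inv a := by
    by_cases hfix : f a = a
    · simp [hfix]
    · by_cases hlt : a < f a <;> simp [hfix, hlt, hf a]
  right_inv := by
    rintro (⟨a, ha⟩ | ⟨⟨a, ha⟩, _ | _⟩)
    · simp [ha]
    · simp [hf a, ha.ne, not_lt.2 ha.le]
    · simp [ha.ne', ha]

theorem equivFixedSumPairs_symm_swap (hf : Involutive f)
    (x : {a // f a = a} ⊕ {a // a < f a} × Bool) :
    hf.equivFixedSumPairs.symm (Sum.map id (Prod.map id not) x) =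
      f (hf.equivFixedSumPairs.symm x) := by
  rcases x with ⟨a, ha⟩ | ⟨a, _ | _⟩
  exacts [ha.symm, (hf a).symm, rfl]

theorem apply_equivFixedSumPairs_symm (hf : Involutive f) {c : α → κ} (hc : ∀ a, c (f a) = c a)
    (x : {a // f a = a} ⊕ {a // a < f a} × Bool) :
    c (hf.equivFixedSumPairs.symm x) =
      Sum.elim (fun a : {a // f a = a} => c a) (fun a : {a // a < f a} × Bool => c a.1) x := by
  rcases x with _ | ⟨a, _ | _⟩
  exacts [rfl, hc a, rfl]

end Function.Involutive

theorem exists_subtypeEquiv_comp_eq_of_card_eq {X Y κ : Type*} [Finite X] [Finite Y]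
    {p : X → Prop} {q : Y → Prop} {c : X → κ} {d : Y → κ}
    (h : ∀ k, Nat.card {x // p x ∧ c x = k} = Nat.card {y // q y ∧ d y = k}) :
    ∃ e : {x // p x} ≃ {y // q y}, ∀ x, d (e x) = c x := by
  let e : ∀ k, {x : {x // p x} // c x = k} ≃ {y : {y // q y} // d y = k} := fun k =>
    (Equiv.subtypeSubtypeEquivSubtypeInter _ _).trans <|
      (Finite.card_eq.1 (h k)).some.trans (Equiv.subtypeSubtypeEquivSubtypeInter _ _).symm
  exact ⟨Equiv.ofFiberEquiv e, Equiv.ofFiberEquiv_map e⟩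

section ColoredInvolution

open Function

variable {α β κ : Type*} [LinearOrder α] [LinearOrder β] [Finite α] [Finite β]
  {f : α → α} {g : β → β} {c : α → κ} {d : β → κ}

theorem exists_equiv_semiconj_of_card_eq (hf : Involutive f) (hg : Involutive g)
    (hc : ∀ a, c (f a) = c a) (hd : ∀ b, d (g b) = d b)
    (hfix : ∀ k, Nat.card {a // f a = a ∧ c a = k} = Nat.card {b // g b = b ∧ d b = k})
    (hpairs : ∀ k, Nat.card {a // a < f a ∧ c a = k} = Nat.card {b // b < g b ∧ d b = k}) :
    ∃ e : α ≃ β, (∀ a, e (f a) = g (e a)) ∧ ∀ a, d (e a) = c a := by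
  obtain ⟨uFix, huFix⟩ := exists_subtypeEquiv_comp_eq_of_card_eq hfix
  obtain ⟨uPairs, huPairs⟩ := exists_subtypeEquiv_comp_eq_of_card_eq hpairs
  let m := Equiv.sumCongr uFix (uPairs.prodCongr (Equiv.refl Bool))
  refine ⟨hf.equivFixedSumPairs.trans (m.trans hg.equivFixedSumPairs.symm),
    fun a => ?_, fun a => ?_⟩
  · obtain ⟨x, rfl⟩ := hf.equivFixedSumPairs.symm.surjective a
    have hm : m (Sum.map id (Prod.map id not) x) = Sum.map id (Prod.map id not) (m x) := by
      rcases x with _ | ⟨_, _⟩ <;> rfl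
    simp only [Equiv.trans_apply, ← hf.equivFixedSumPairs_symm_swap, Equiv.apply_symm_apply, hm,
      hg.equivFixedSumPairs_symm_swap]
  · obtain ⟨x, rfl⟩ := hf.equivFixedSumPairs.symm.surjective a
    simp only [Equiv.trans_apply, Equiv.apply_symm_apply, hg.apply_equivFixedSumPairs_symm hd,
      hf.apply_equivFixedSumPairs_symm hc]
    rcases x with x | ⟨x, _⟩
    exacts [huFix x, huPairs x]

theorem card_fiber_eq_card_fixed_add_two_mul_card_pairs (hf : Involutive f)
    (hc : ∀ a, c (f a) = c a) (k : κ) :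
    Nat.card {a // c a = k} =
      Nat.card {a // f a = a ∧ c a = k} + 2 * Nat.card {a // a < f a ∧ c a = k} := by
  have e : {a // c a = k} ≃
      {a : {a // f a = a} // c a = k} ⊕ {a : {a // a < f a} // c a = k} × Bool :=
    (hf.equivFixedSumPairs.subtypeEquiv (q := fun x => Sum.elim (fun a : {a // f a = a} => c a)
        (fun a : {a // a < f a} × Bool => c a.1) x = k) fun a => by
      rw [← hf.apply_equivFixedSumPairs_symm hc, Equiv.symm_apply_apply]).trans
      (Equiv.subtypeSum.trans (Equiv.sumCongr (Equiv.refl _)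
        (Equiv.prodSubtypeFstEquivSubtypeProd (p := fun a : {a // a < f a} => c a = k))))
  rw [Nat.card_congr e, Nat.card_sum, Nat.card_prod, Nat.card_eq_fintype_card (α := Bool),
    Fintype.card_bool, mul_comm,
    Nat.card_congr (Equiv.subtypeSubtypeEquivSubtypeInter (fun a => f a = a) (c · = k)),
    Nat.card_congr (Equiv.subtypeSubtypeEquivSubtypeInter (fun a => a < f a) (c · = k))]

theorem card_eq_of_equiv_semiconj (hf : Involutive f) (hg : Involutive g)
    (hc : ∀ a, c (f a) = c a) (hd : ∀ b, d (g b) = d b) (e : α ≃ β)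
    (hfg : ∀ a, e (f a) = g (e a)) (hcd : ∀ a, d (e a) = c a) (k : κ) :
    Nat.card {a // f a = a ∧ c a = k} = Nat.card {b // g b = b ∧ d b = k} ∧
      Nat.card {a // a < f a ∧ c a = k} = Nat.card {b // b < g b ∧ d b = k} := by
  have hfix : Nat.card {a // f a = a ∧ c a = k} = Nat.card {b // g b = b ∧ d b = k} :=
    Nat.card_congr (e.subtypeEquiv fun a => by rw [← hfg, e.apply_eq_iff_eq, hcd])
  -- `e` need not respect the order, so the pairs are counted through the colour classes.
  have hfiber : Nat.card {a // c a = k} = Nat.card {b // d b = k} :=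
    Nat.card_congr (e.subtypeEquiv fun a => by rw [hcd])
  have := card_fiber_eq_card_fixed_add_two_mul_card_pairs hf hc k
  have := card_fiber_eq_card_fixed_add_two_mul_card_pairs hg hd k
  omega

theorem exists_equiv_semiconj_iff_card_eq (hf : Involutive f) (hg : Involutive g)
    (hc : ∀ a, c (f a) = c a) (hd : ∀ b, d (g b) = d b) :
    (∃ e : α ≃ β, (∀ a, e (f a) = g (e a)) ∧ ∀ a, d (e a) = c a) ↔
      ∀ k, Nat.card {a // f a = a ∧ c a = k} = Nat.card {b // g b = b ∧ d b = k} ∧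
        Nat.card {a // a < f a ∧ c a = k} = Nat.card {b // b < g b ∧ d b = k} :=
  ⟨fun ⟨e, hfg, hcd⟩ => card_eq_of_equiv_semiconj hf hg hc hd e hfg hcd,
    fun h => exists_equiv_semiconj_of_card_eq hf hg hc hd (fun k => (h k).1) fun k => (h k).2⟩

end ColoredInvolution

namespace WreathG

variable {r n : ℕ} {v : WreathG r n}

theorem IsAbsInv.involutive (hv : v.IsAbsInv) : Function.Involutive v.p :=
  fun j => by simpa [sq] using Equiv.ext_iff.1 hv.1 j

theorem IsAbsInv.z_p (hv : v.IsAbsInv) (j : Fin n) : v.z (v.p j) = v.z j :=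
  congrFun hv.2 j

theorem IsAbsInv.pairc_eq (hv : v.IsAbsInv) (i : ZMod r) :
    pairc v i = Nat.card {j // j < v.p j ∧ v.z j = i} :=
  Nat.card_congr
    { toFun := fun q => ⟨q.1.1, q.2.2.1 ▸ q.2.1, q.2.2.2.1⟩
      invFun := fun j => ⟨(j.1, v.p j.1), j.2.1, rfl, j.2.2, (hv.z_p _).trans j.2.2⟩
      left_inv := fun q => Subtype.ext (Prod.ext rfl q.2.2.1)
      right_inv := fun _ => rfl }

theorem eq_aconj_iff {w : WreathG r n} (τ : Equiv.Perm (Fin n)) :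
    w = aconj τ v ↔ (∀ j, τ (v.p j) = w.p (τ j)) ∧ ∀ j, w.z (τ j) = v.z j := by
  rw [WreathG.ext_iff]
  change w.z = v.z ∘ τ.symm ∧ w.p = τ * v.p * τ⁻¹ ↔ _
  rw [and_comm, eq_mul_inv_iff_mul_eq, Equiv.ext_iff, funext_iff]
  refine and_congr (forall_congr' fun j => eq_comm) ?_
  rw [← τ.forall_congr_right]
  simp only [Function.comp_apply, Equiv.symm_apply_apply]

end WreathG

theorem sConjugate_iff_same_statistics_general (r n : ℕ)
    (v w : WreathG r n) (hv : WreathG.IsAbsInv v) (hw : WreathG.IsAbsInv w) :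
    (∃ τ : Equiv.Perm (Fin n), w = WreathG.aconj τ v) ↔
      (∀ i : ZMod r, WreathG.fixc v i = WreathG.fixc w i ∧
        WreathG.pairc v i = WreathG.pairc w i) := by
  simp only [WreathG.eq_aconj_iff, hv.pairc_eq, hw.pairc_eq]
  exact exists_equiv_semiconj_iff_card_eq hv.involutive hw.involutive hv.z_p hw.z_p

/-- Two absolute involutions of `G(r,n)` are `S_n`-conjugate if and only if
they have the same statistics `fix_i` and `pair_i` for every `i ∈ ZMod r`. -/
theorem sConjugate_iff_same_statistics (r n : ℕ) [NeZero r] (hn : 0 < n)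
    (v w : WreathG r n) (hv : WreathG.IsAbsInv v) (hw : WreathG.IsAbsInv w) :
    (∃ τ : Equiv.Perm (Fin n), w = WreathG.aconj τ v) ↔
      (∀ i : ZMod r, WreathG.fixc v i = WreathG.fixc w i ∧
        WreathG.pairc v i = WreathG.pairc w i) :=
  sConjugate_iff_same_statistics_general r n v w hv hw
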